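/- Let G consist of a path u = w_0, w_1, ..., w_k = v with edges e_i = w_{i-1} w_i, plus two pendant edges e', e'' at u and two pendant edges q, q' at v (so deg(u) = deg(v) = 3 when k ≥ 1, with u, v each adjacent to two leaves). Then the labeling obtained by assigning labels 1, 2, ..., k+4 in the edge order e_2, e_4, ..., e_{2⌊k/2⌋}, e', e'', q, q', e_1, e_3, ..., e_{2⌊k/2⌋+1} (the last term present only when k is odd) is strongly antimagic. -/

import Mathlib

open Finset

open scoped Classical

noncomputable section

variable {V : Type*} [Fintype V] [DecidableEq V]

/-- The finset of edges of a simple graph on a finite vertex type. -/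
def edges (G : SimpleGraph V) : Finset (Sym2 V) :=
  Finset.univ.filter (fun e => e ∈ G.edgeSet)

/-- The vertex sum `φ_f(v)`: the sum of the labels of the edges incident to `v`. -/
def phi (G : SimpleGraph V) (f : Sym2 V → ℕ) (v : V) : ℕ :=
  ∑ e ∈ (edges G).filter (fun e => v ∈ e), f e

/-- The degree of a vertex: the number of edges incident to it. -/
def deg (G : SimpleGraph V) (v : V) : ℕ :=
  ((edges G).filter (fun e => v ∈ e)).card

/-- `f` is a strongly antimagic labeling of `G`: a bijection from the edge set onto
`{1, …, m}` with pairwise distinct vertex sums, such that larger degree forces a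
larger vertex sum. -/
def IsStronglyAntimagicLabeling (G : SimpleGraph V) (f : Sym2 V → ℕ) : Prop :=
  Set.BijOn f (edges G : Set (Sym2 V)) (Set.Icc 1 (edges G).card) ∧
  (∀ u v : V, u ≠ v → phi G f u ≠ phi G f v) ∧
  (∀ u v : V, deg G v < deg G u → phi G f v < phi G f u)

/-- A graph is strongly antimagic if it admits a strongly antimagic labeling. -/
def IsStronglyAntimagic (G : SimpleGraph V) : Prop :=
  ∃ f : Sym2 V → ℕ, IsStronglyAntimagicLabeling G f

/-- The graph of STATEMENT 16: a path `w_0, …, w_k` (vertices `Sum.inl i`), two pendant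
edges `e' = w_0 (inr 0)`, `e'' = w_0 (inr 1)` at `u = w_0`, and two pendant edges
`q = w_k (inr 2)`, `q' = w_k (inr 3)` at `v = w_k`. -/
def dblSpiderB (k : ℕ) : SimpleGraph (Fin (k + 1) ⊕ Fin 4) :=
  SimpleGraph.fromEdgeSet (
    {e | ∃ i j : Fin (k + 1), (j : ℕ) = (i : ℕ) + 1 ∧ e = s(Sum.inl i, Sum.inl j)}
    ∪ {e | ∃ i : Fin (k + 1), (i : ℕ) = 0 ∧
        (e = s(Sum.inl i, Sum.inr 0) ∨ e = s(Sum.inl i, Sum.inr 1))}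
    ∪ {e | ∃ i : Fin (k + 1), (i : ℕ) = k ∧
        (e = s(Sum.inl i, Sum.inr 2) ∨ e = s(Sum.inl i, Sum.inr 3))})

/-- The smaller 0-indexed path endpoint of an edge (junk value `0` on `inr`). -/
def minIdxB {k : ℕ} : Sym2 (Fin (k + 1) ⊕ Fin 4) → ℕ :=
  Sym2.lift ⟨fun a b =>
      min (Sum.elim (fun i : Fin (k + 1) => (i : ℕ)) (fun _ => 0) a)
        (Sum.elim (fun i : Fin (k + 1) => (i : ℕ)) (fun _ => 0) b),
    fun a b => min_comm _ _⟩

/-- The labeling of STATEMENT 16: labels `1, …, k+4` in the order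
`(e_2, e_4, …, e_{2⌊k/2⌋}, e', e'', q, q', e_1, e_3, …)`. -/
def labB (k : ℕ) : Sym2 (Fin (k + 1) ⊕ Fin 4) → ℕ := fun e =>
  if (Sum.inr 0 : Fin (k + 1) ⊕ Fin 4) ∈ e then k / 2 + 1
  else if (Sum.inr 1 : Fin (k + 1) ⊕ Fin 4) ∈ e then k / 2 + 2
  else if (Sum.inr 2 : Fin (k + 1) ⊕ Fin 4) ∈ e then k / 2 + 3
  else if (Sum.inr 3 : Fin (k + 1) ⊕ Fin 4) ∈ e then k / 2 + 4
  else if (minIdxB e + 1) % 2 = 0 then (minIdxB e + 1) / 2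
  else k / 2 + 4 + (minIdxB e + 1 + 1) / 2

/-!
Consecutive path edges carry one label `≤ ⌊k/2⌋` (even index) and one label `> ⌊k/2⌋ + 4`
(odd index), arranged so that the interior vertex `w_i` gets the vertex sum `i + ⌊k/2⌋ + 5`.
The leaves get the sums `⌊k/2⌋ + 1, …, ⌊k/2⌋ + 4`, and the two branch vertices get
`3⌊k/2⌋ + 8` and either `3⌊k/2⌋ + 7` (`k` even) or `2k + 10` (`k` odd). These values are
pairwise distinct, and the leaf sums lie below the interior sums, which lie below the
branch-vertex sums.
-/

section EdgeEnumeration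

variable {ι : Type*} {G : SimpleGraph V} {s : Finset ι} {ed : ι → Sym2 V}

theorem phi_eq_sum_of_edges_eq_image (hG : edges G = s.image ed) (hed : Set.InjOn ed s)
    (f : Sym2 V → ℕ) (v : V) :
    phi G f v = ∑ n ∈ s.filter (fun n => v ∈ ed n), f (ed n) := by
  rw [phi, hG, filter_image, sum_image (hed.mono (coe_subset.2 (filter_subset _ _)))]

theorem deg_eq_card_of_edges_eq_image (hG : edges G = s.image ed) (hed : Set.InjOn ed s)
    (v : V) : deg G v = #(s.filter (fun n => v ∈ ed n)) := by
  rw [deg, hG, filter_image, card_image_of_injOn (hed.mono (coe_subset.2 (filter_subset _ _)))]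

end EdgeEnumeration

theorem exists_fin_add_eq {k m n : ℕ} (h₁ : k ≤ n) (h₂ : n < k + m) :
    ∃ t : Fin m, k + t = n :=
  ⟨⟨n - k, by omega⟩, by simp only; omega⟩

/-- The `n`-th edge of `dblSpiderB k` in path order: `e_{n+1} = w_n w_{n+1}` for `n < k`, then
`e', e'', q, q'` for `n = k, …, k + 3`. -/
def spiderEdge (k n : ℕ) : Sym2 (Fin (k + 1) ⊕ Fin 4) :=
  if h : n < k then s(.inl ⟨n, by omega⟩, .inl ⟨n + 1, by omega⟩)
  else if n < k + 2 then s(.inl 0, .inr (Fin.ofNat 4 (n - k)))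
  else s(.inl (Fin.last k), .inr (Fin.ofNat 4 (n - k)))

theorem spiderEdge_of_lt {k n : ℕ} (h : n < k) :
    spiderEdge k n = s(.inl ⟨n, by omega⟩, .inl ⟨n + 1, by omega⟩) := dif_pos h

theorem spiderEdge_add (k : ℕ) (t : Fin 4) :
    spiderEdge k (k + t) = s(.inl (if (t : ℕ) < 2 then 0 else Fin.last k), .inr t) := by
  unfold spiderEdge
  split_ifs <;> first | omega | simp

theorem inl_mem_spiderEdge_iff {k n : ℕ} (hn : n < k + 4) (i : Fin (k + 1)) :
    .inl i ∈ spiderEdge k n ↔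
      n < k ∧ ((i : ℕ) = n ∨ (i : ℕ) = n + 1) ∨ k ≤ n ∧ n < k + 2 ∧ (i : ℕ) = 0 ∨
        k + 2 ≤ n ∧ (i : ℕ) = k := by
  unfold spiderEdge
  split_ifs <;>
    simp only [Sym2.mem_iff, Sum.inl.injEq, reduceCtorEq, Fin.ext_iff, Fin.val_zero,
      Fin.val_last, or_false] <;>
    omega

theorem inr_mem_spiderEdge_iff {k n : ℕ} (hn : n < k + 4) (t : Fin 4) :
    .inr t ∈ spiderEdge k n ↔ n = k + t := by
  unfold spiderEdge
  split_ifs <;>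
    simp only [Fin.ofNat_eq_cast, Sym2.mem_iff, reduceCtorEq, Sum.inr.injEq, Fin.ext_iff,
      Fin.val_natCast, or_self, false_or, false_iff] <;>
    omega

theorem mem_edgeSet_dblSpiderB {k : ℕ} {e : Sym2 (Fin (k + 1) ⊕ Fin 4)} :
    e ∈ (dblSpiderB k).edgeSet ↔ ∃ n < k + 4, spiderEdge k n = e := by
  rw [dblSpiderB, SimpleGraph.edgeSet_fromEdgeSet]
  constructor
  · rintro ⟨(⟨i, j, hij, rfl⟩ | ⟨i, hi, he⟩) | ⟨i, hi, he⟩, -⟩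
    · refine ⟨i, by omega, ?_⟩
      rw [spiderEdge_of_lt (by omega)]
      simp [Fin.ext_iff, hij]
    · obtain rfl : i = 0 := Fin.ext hi
      rcases he with rfl | rfl
      · exact ⟨k + 0, by omega, by simpa using spiderEdge_add k 0⟩
      · exact ⟨k + 1, by omega, by simpa using spiderEdge_add k 1⟩
    · obtain rfl : i = Fin.last k := Fin.ext hi
      rcases he with rfl | rfl
      · exact ⟨k + 2, by omega, by simpa using spiderEdge_add k 2⟩
      · exact ⟨k + 3, by omega, by simpa using spiderEdge_add k 3⟩
  · rintro ⟨n, hn, rfl⟩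
    by_cases h : n < k
    · rw [spiderEdge_of_lt h]
      exact ⟨.inl (.inl ⟨_, _, rfl, rfl⟩), by simp⟩
    obtain ⟨t, rfl⟩ := exists_fin_add_eq (not_lt.1 h) hn
    rw [spiderEdge_add]
    refine ⟨?_, by simp⟩
    split_ifs with ht
    · exact .inl (.inr ⟨0, rfl, by fin_cases t <;> simp at ht ⊢⟩)
    · exact .inr ⟨Fin.last k, rfl, by fin_cases t <;> simp at ht ⊢⟩

def spiderLabel (k n : ℕ) : ℕ :=
  if n < k then (if n % 2 = 1 then (n + 1) / 2 else k / 2 + 4 + (n + 2) / 2)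
  else n - k + (k / 2 + 1)

theorem labB_inl_inr (k : ℕ) (a : Fin (k + 1)) (t : Fin 4) :
    labB k s(.inl a, .inr t) = k / 2 + 1 + t := by
  fin_cases t <;> simp [labB]

theorem labB_spiderEdge {k n : ℕ} (hn : n < k + 4) :
    labB k (spiderEdge k n) = spiderLabel k n := by
  by_cases h : n < k
  · rw [spiderEdge_of_lt h, spiderLabel, if_pos h]
    simp only [labB, minIdxB, Sym2.mem_iff, reduceCtorEq, or_self, if_false, Sym2.lift_mk,
      Sum.elim_inl, min_eq_left (Nat.le_succ n)]
    split_ifs <;> omega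
  · obtain ⟨t, rfl⟩ := exists_fin_add_eq (not_lt.1 h) hn
    rw [spiderEdge_add, labB_inl_inr, spiderLabel, if_neg h]
    omega

theorem spiderLabel_bijOn (k : ℕ) :
    Set.BijOn (spiderLabel k) (Set.Iio (k + 4)) (Set.Icc 1 (k + 4)) := by
  refine ⟨fun n hn => ?_, fun n hn n' hn' h => ?_, fun m hm => ?_⟩
  · simp only [Set.mem_Iio, Set.mem_Icc, spiderLabel] at hn ⊢
    split_ifs <;> omega
  · simp only [Set.mem_Iio, spiderLabel] at hn hn' h
    split_ifs at h <;> omega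
  · simp only [Set.mem_Iio, Set.mem_Icc, Set.mem_image, spiderLabel] at hm ⊢
    by_cases h₁ : m ≤ k / 2
    · exact ⟨2 * m - 1, by split_ifs <;> omega⟩
    by_cases h₂ : m ≤ k / 2 + 4
    · exact ⟨k + (m - (k / 2 + 1)), by split_ifs <;> omega⟩
    · exact ⟨2 * (m - (k / 2 + 4)) - 2, by split_ifs <;> omega⟩

theorem labB_comp_spiderEdge_bijOn (k : ℕ) :
    Set.BijOn (labB k ∘ spiderEdge k) (range (k + 4)) (Set.Icc 1 (k + 4)) := by
  rw [coe_range]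
  exact (spiderLabel_bijOn k).congr fun n hn => (labB_spiderEdge hn).symm

theorem spiderEdge_injOn (k : ℕ) : Set.InjOn (spiderEdge k) (range (k + 4)) :=
  (labB_comp_spiderEdge_bijOn k).injOn.of_comp

theorem edges_dblSpiderB (k : ℕ) :
    edges (dblSpiderB k) = (range (k + 4)).image (spiderEdge k) := by
  ext e
  simp [edges, mem_edgeSet_dblSpiderB]

theorem card_edges_dblSpiderB (k : ℕ) : #(edges (dblSpiderB k)) = k + 4 := by
  rw [edges_dblSpiderB, card_image_of_injOn (spiderEdge_injOn k), card_range]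

theorem filter_inr_mem_spiderEdge (k : ℕ) (t : Fin 4) :
    (range (k + 4)).filter (fun n => .inr t ∈ spiderEdge k n) = {k + t} := by
  ext n
  simp only [mem_filter, mem_range, mem_singleton]
  constructor
  · rintro ⟨hn, hmem⟩
    exact (inr_mem_spiderEdge_iff hn t).1 hmem
  · rintro rfl
    exact ⟨by omega, (inr_mem_spiderEdge_iff (by omega) t).2 rfl⟩

theorem filter_inl_mem_spiderEdge {k : ℕ} (hk : 1 ≤ k) (i : Fin (k + 1)) :
    (range (k + 4)).filter (fun n => .inl i ∈ spiderEdge k n) =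
      if (i : ℕ) = 0 then {0, k, k + 1}
      else if (i : ℕ) = k then {k - 1, k + 2, k + 3}
      else {(i : ℕ) - 1, (i : ℕ)} := by
  have hi := i.isLt
  ext n
  simp only [mem_filter, mem_range]
  constructor
  · rintro ⟨hn, hmem⟩
    rw [inl_mem_spiderEdge_iff hn] at hmem
    split_ifs <;> simp only [mem_insert, mem_singleton] <;> omega
  · intro hmem
    have hn : n < k + 4 := by
      split_ifs at hmem <;> simp only [mem_insert, mem_singleton] at hmem <;> omega
    refine ⟨hn, (inl_mem_spiderEdge_iff hn i).2 ?_⟩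
    split_ifs at hmem <;> simp only [mem_insert, mem_singleton] at hmem <;> omega

theorem phi_dblSpiderB (k : ℕ) (v : Fin (k + 1) ⊕ Fin 4) :
    phi (dblSpiderB k) (labB k) v =
      ∑ n ∈ (range (k + 4)).filter (fun n => v ∈ spiderEdge k n), spiderLabel k n := by
  rw [phi_eq_sum_of_edges_eq_image (edges_dblSpiderB k) (spiderEdge_injOn k)]
  exact sum_congr rfl fun n hn => labB_spiderEdge (mem_range.1 (mem_filter.1 hn).1)

theorem deg_dblSpiderB (k : ℕ) (v : Fin (k + 1) ⊕ Fin 4) :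
    deg (dblSpiderB k) v = #((range (k + 4)).filter (fun n => v ∈ spiderEdge k n)) :=
  deg_eq_card_of_edges_eq_image (edges_dblSpiderB k) (spiderEdge_injOn k) v

def spiderPathSum (k i : ℕ) : ℕ :=
  if i = 0 then 3 * (k / 2) + 8
  else if i = k then (if k % 2 = 0 then 3 * (k / 2) + 7 else 2 * k + 10)
  else i + k / 2 + 5

theorem phi_dblSpiderB_inr (k : ℕ) (t : Fin 4) :
    phi (dblSpiderB k) (labB k) (.inr t) = k / 2 + 1 + t := by
  rw [phi_dblSpiderB, filter_inr_mem_spiderEdge, sum_singleton, spiderLabel, if_neg (by omega)]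
  omega

theorem phi_dblSpiderB_inl {k : ℕ} (hk : 1 ≤ k) (i : Fin (k + 1)) :
    phi (dblSpiderB k) (labB k) (.inl i) = spiderPathSum k i := by
  have hi := i.isLt
  rw [phi_dblSpiderB, filter_inl_mem_spiderEdge hk, spiderPathSum]
  split_ifs <;>
    first
    | omega
    | rw [sum_insert (by simp only [mem_insert, mem_singleton]; omega), sum_pair (by omega)]
    | rw [sum_pair (by omega)]
  all_goals simp only [spiderLabel]
  all_goals split_ifs <;> first | contradiction | omega

theorem deg_dblSpiderB_inr (k : ℕ) (t : Fin 4) : deg (dblSpiderB k) (.inr t) = 1 := by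
  rw [deg_dblSpiderB, filter_inr_mem_spiderEdge, card_singleton]

theorem deg_dblSpiderB_inl {k : ℕ} (hk : 1 ≤ k) (i : Fin (k + 1)) :
    deg (dblSpiderB k) (.inl i) = if (i : ℕ) = 0 ∨ (i : ℕ) = k then 3 else 2 := by
  have hi := i.isLt
  rw [deg_dblSpiderB, filter_inl_mem_spiderEdge hk]
  split_ifs <;>
    first
    | omega
    | rw [card_insert_of_notMem (by simp only [mem_insert, mem_singleton]; omega),
        card_pair (by omega)]
    | rw [card_pair (by omega)]

theorem spiderPathSum_injOn {k : ℕ} (hk : 1 ≤ k) : Set.InjOn (spiderPathSum k) (Set.Iic k) := by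
  intro i hi j hj h
  simp only [Set.mem_Iic] at hi hj
  unfold spiderPathSum at h
  split_ifs at h <;> omega

theorem add_four_lt_spiderPathSum (k i : ℕ) : k / 2 + 4 < spiderPathSum k i := by
  unfold spiderPathSum
  split_ifs <;> omega

theorem spiderPathSum_interior_lt_end {k i j : ℕ} (hi0 : i ≠ 0) (hik : i < k)
    (hj : j = 0 ∨ j = k) : spiderPathSum k i < spiderPathSum k j := by
  unfold spiderPathSum
  split_ifs <;> omega

/-- the explicit labeling of the double spider with two pendant edges at
each end of the path is strongly antimagic. -/
theorem stmt_16 (k : ℕ) (hk : 1 ≤ k) :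
    IsStronglyAntimagicLabeling (dblSpiderB k) (labB k) := by
  refine ⟨?_, ?_, ?_⟩
  · rw [card_edges_dblSpiderB, edges_dblSpiderB, coe_image,
      ← Set.bijOn_comp_iff (spiderEdge_injOn k)]
    exact labB_comp_spiderEdge_bijOn k
  · rintro (i | t) (j | t') hne <;>
      simp only [phi_dblSpiderB_inl hk, phi_dblSpiderB_inr]
    · exact fun h => hne (congrArg _ (Fin.ext (spiderPathSum_injOn hk i.is_le j.is_le h)))
    · have := add_four_lt_spiderPathSum k i; omega
    · have := add_four_lt_spiderPathSum k j; omega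
    · exact fun h => hne (congrArg _ (Fin.ext (by omega)))
  · rintro (i | t) (j | t') hdeg <;>
      simp only [deg_dblSpiderB_inl hk, deg_dblSpiderB_inr] at hdeg <;>
      simp only [phi_dblSpiderB_inl hk, phi_dblSpiderB_inr]
    · obtain ⟨hj, hi⟩ : ¬((j : ℕ) = 0 ∨ (j : ℕ) = k) ∧ ((i : ℕ) = 0 ∨ (i : ℕ) = k) := by
        split_ifs at hdeg <;> omega
      exact spiderPathSum_interior_lt_end (by omega) (by omega) hi
    · have := add_four_lt_spiderPathSum k i; omega
    · split_ifs at hdeg <;> omega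
    · omega
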